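/- arXiv:2402.08794 — 3 statements merged into one kernel-verified Lean document; each statement's English description precedes it below -/
import Mathlib

section
/- Let 0 < α < 1 and let (p_k)_{k∈ℕ} and (q_k)_{k∈ℕ} be sequences in [0,1] satisfying q_0 = 1, q_k = q_{k−1}·(1 − p_k) for all k ≥ 1 (where p_k is the conditional error at step k), and q_k ≥ 1 − α for all k. Then ∑_{k=1}^∞ p_k ≤ α/(1−α). -/
open Finset

/-- Lemma `cond-err-ub`: if `q k = q (k-1) * (1 - p k)` records the probability of no
error in the first `k` tests, `q k ≥ 1 - α` for all `k`, then the sum of conditional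
errors is at most `α / (1 - α)`. -/
theorem sum_condErr_le (α : ℝ) (hα0 : 0 < α) (hα1 : α < 1) (p q : ℕ → ℝ)
    (hp : ∀ k, p k ∈ Set.Icc (0 : ℝ) 1) (hq : ∀ k, q k ∈ Set.Icc (0 : ℝ) 1)
    (hq0 : q 0 = 1) (hrec : ∀ k, 1 ≤ k → q k = q (k - 1) * (1 - p k))
    (hcov : ∀ k, 1 - α ≤ q k) :
    ∀ n : ℕ, ∑ k ∈ Finset.Icc 1 n, p k ≤ α / (1 - α) := by
  have hα : 0 < 1 - α := by linarith
  have key : ∀ n : ℕ, q n ≤ q 0 - (1 - α) * ∑ k ∈ Finset.Icc 1 n, p k := by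
    intro n
    induction n with
    | zero => simp
    | succ m ih =>
      rw [Finset.sum_Icc_succ_top (by omega)]
      have hrec' := hrec (m + 1) (by omega)
      simp only [Nat.add_sub_cancel] at hrec'
      have hpk := hp (m + 1)
      have hqm := hcov m
      have : q (m + 1) ≤ q m - (1 - α) * p (m + 1) := by
        rw [hrec']
        have := hpk.1
        nlinarith
      linarith
  intro n
  have h := key n
  have h2 := hcov n
  rw [hq0] at h
  rw [le_div_iff₀ hα]
  nlinarith [hq n |>.2]
end

section
/- For Cauchy distributions with densities p_θ(x) = 1/(πσ(1 + ((x−θ)/σ)²)), the KL divergence satisfies KL(P_θ || P_{θ'}) = log(1 + (θ − θ')²/(4σ²)), and in particular KL(P_θ || P_{θ'}) ≤ (θ − θ')²/(4σ²). -/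
open MeasureTheory ProbabilityTheory
open scoped ENNReal NNReal

open Classical in
/-- Kullback–Leibler divergence: `∫ log (dP/dQ) dP` if `P ≪ Q`, else `+∞`. -/
noncomputable def klDiv {X : Type*} [MeasurableSpace X] (P Q : Measure X) : ℝ≥0∞ :=
  if P ≪ Q then ENNReal.ofReal (∫ x, Real.log (P.rnDeriv Q x).toReal ∂P) else ⊤

/-- The Cauchy distribution with location `θ` and scale `σ`, defined by its density
`x ↦ 1 / (πσ(1 + ((x−θ)/σ)²))` with respect to Lebesgue measure. -/
noncomputable def cauchyMeasure (θ σ : ℝ) : Measure ℝ :=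
  volume.withDensity fun x =>
    ENNReal.ofReal (1 / (Real.pi * σ * (1 + ((x - θ) / σ) ^ 2)))

/-!
After the substitution `x = θ + σ u`, the divergence is `F b` with `b = (θ' - θ) / σ` and
`F b = ∫ (log (1 + (u - b)²) - log (1 + u²)) / (π (1 + u²)) du`. Write the integrand as the
integral over `t ∈ [0, b]` of its `t`-derivative, which is dominated by the standard Cauchy
density, and swap the integrals. The inner integral over `u` is `2 t / (t² + 4)`, computed from
an explicit primitive found by partial fractions; integrating in `t` gives
`F b = log (1 + b² / 4)`, and `log (1 + y) ≤ y` gives the bound.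
-/

open Real Filter Topology

theorem klDiv_withDensity_ofReal {X : Type*} [MeasurableSpace X] {μ : Measure X}
    [SigmaFinite μ] {f g : X → ℝ} (hf : Measurable f) (hg : Measurable g) (hf0 : 0 ≤ f)
    (hg0 : ∀ x, 0 < g x) :
    klDiv (μ.withDensity fun x => ENNReal.ofReal (f x))
        (μ.withDensity fun x => ENNReal.ofReal (g x)) =
      ENNReal.ofReal (∫ x, f x * log (f x / g x) ∂μ) := by
  set P := μ.withDensity fun x => ENNReal.ofReal (f x)
  set Q := μ.withDensity fun x => ENNReal.ofReal (g x)
  set r : X → ℝ≥0∞ := fun x => ENNReal.ofReal (f x) / ENNReal.ofReal (g x)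
  have hr : Measurable r := hf.ennreal_ofReal.div hg.ennreal_ofReal
  have hPQ : P = Q.withDensity r := by
    rw [← withDensity_mul μ hg.ennreal_ofReal hr]
    refine congrArg μ.withDensity (funext fun x => ?_)
    exact (ENNReal.mul_div_cancel (ENNReal.ofReal_pos.2 (hg0 x)).ne' ENNReal.ofReal_ne_top).symm
  have hac : P ≪ Q := hPQ ▸ withDensity_absolutelyContinuous _ _
  have hrn : P.rnDeriv Q =ᵐ[P] r := hac.ae_eq (hPQ ▸ Measure.rnDeriv_withDensity Q hr)
  rw [klDiv, if_pos hac, integral_congr_ae (hrn.mono fun x hx => by rw [hx]),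
    integral_withDensity_eq_integral_toReal_smul hf.ennreal_ofReal
      (Eventually.of_forall fun _ => ENNReal.ofReal_lt_top)]
  refine congrArg ENNReal.ofReal (integral_congr_ae (Eventually.of_forall fun x => ?_))
  simp [r, ENNReal.toReal_div, ENNReal.toReal_ofReal (hf0 x), ENNReal.toReal_ofReal (hg0 x).le]

theorem abs_two_mul_div_one_add_sq_le_one (y : ℝ) : |2 * y / (1 + y ^ 2)| ≤ 1 := by
  have h : 0 < 1 + y ^ 2 := by positivity
  rw [abs_le, le_div_iff₀ h, div_le_iff₀ h]
  constructor <;> nlinarith [sq_nonneg (y + 1), sq_nonneg (y - 1)]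

theorem integrable_inv_pi_mul_one_add_sq : Integrable fun x : ℝ => (π * (1 + x ^ 2))⁻¹ := by
  simpa [mul_inv, mul_comm] using integrable_inv_one_add_sq.const_mul π⁻¹

theorem tendsto_log_one_add_sq_sub_log_one_add_sub_sq (t : ℝ) :
    Tendsto (fun x => log (1 + x ^ 2) - log (1 + (x - t) ^ 2)) (cocompact ℝ) (𝓝 0) := by
  have hinv : Tendsto (fun x : ℝ => x⁻¹) (cocompact ℝ) (𝓝 0) :=
    Metric.cobounded_eq_cocompact (α := ℝ) ▸ tendsto_inv₀_cobounded
  -- substituting `u = x⁻¹` turns this into the ratio `(1 + x²) / (1 + (x - t)²)`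
  have hφ : Tendsto (fun u : ℝ => (u ^ 2 + 1) / (u ^ 2 + (1 - t * u) ^ 2)) (𝓝 0) (𝓝 1) := by
    have : ContinuousAt (fun u : ℝ => (u ^ 2 + 1) / (u ^ 2 + (1 - t * u) ^ 2)) 0 := by
      fun_prop (disch := norm_num)
    simpa using this.tendsto
  have hratio :
      Tendsto (fun x : ℝ => (1 + x ^ 2) / (1 + (x - t) ^ 2)) (cocompact ℝ) (𝓝 1) := by
    refine (hφ.comp hinv).congr' ?_
    filter_upwards [(isCompact_singleton : IsCompact {(0 : ℝ)}).compl_mem_cocompact] with x hx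
    have hx : x ≠ 0 := hx
    have : (1 : ℝ) + (x - t) ^ 2 ≠ 0 := by positivity
    simp only [Function.comp_apply]
    field_simp
  have hpos (y : ℝ) : (1 + y ^ 2 : ℝ) ≠ 0 := by positivity
  simpa [log_div (hpos _) (hpos _)] using hratio.log one_ne_zero

theorem tendsto_arctan_sub_sub_arctan (t : ℝ) :
    Tendsto (fun x => arctan (x - t) - arctan x) (cocompact ℝ) (𝓝 0) := by
  rw [cocompact_eq_atBot_atTop, tendsto_sup]
  constructor
  · have h := tendsto_nhds_of_tendsto_nhdsWithin tendsto_arctan_atBot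
    simpa [sub_eq_add_neg] using
      (h.comp (tendsto_atBot_add_const_right _ (-t) tendsto_id)).sub h
  · have h := tendsto_nhds_of_tendsto_nhdsWithin tendsto_arctan_atTop
    simpa [sub_eq_add_neg] using
      (h.comp (tendsto_atTop_add_const_right _ (-t) tendsto_id)).sub h

namespace CauchyKL

/-- The `t`-derivative of `(log (1 + (x - t)²) - log (1 + x²)) / (π (1 + x²))`. -/
noncomputable def integrandDeriv (t x : ℝ) : ℝ :=
  2 * (t - x) / ((1 + (x - t) ^ 2) * (π * (1 + x ^ 2)))

theorem continuous_integrandDeriv : Continuous (Function.uncurry integrandDeriv) := by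
  refine Continuous.div (by fun_prop) (by fun_prop) fun p => ?_
  have := pi_pos
  positivity

theorem abs_integrandDeriv_le (t x : ℝ) : |integrandDeriv t x| ≤ (π * (1 + x ^ 2))⁻¹ := by
  have hx : 0 < π * (1 + x ^ 2) := by positivity
  have h : integrandDeriv t x = 2 * (t - x) / (1 + (t - x) ^ 2) * (π * (1 + x ^ 2))⁻¹ := by
    rw [integrandDeriv, ← neg_sub t x, neg_sq]
    field_simp
  rw [h, abs_mul, abs_of_pos (inv_pos.2 hx)]
  exact mul_le_of_le_one_left (inv_pos.2 hx).le (abs_two_mul_div_one_add_sq_le_one _)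

theorem integrable_integrandDeriv (t : ℝ) : Integrable (integrandDeriv t) :=
  integrable_inv_pi_mul_one_add_sq.mono'
    (continuous_integrandDeriv.comp (Continuous.prodMk_right t)).aestronglyMeasurable
    (Eventually.of_forall (abs_integrandDeriv_le t))

theorem intervalIntegral_integrandDeriv (x b : ℝ) :
    ∫ t in (0 : ℝ)..b, integrandDeriv t x =
      (log (1 + (x - b) ^ 2) - log (1 + x ^ 2)) / (π * (1 + x ^ 2)) := by
  have hderiv (t : ℝ) : HasDerivAt (fun t => log (1 + (x - t) ^ 2) / (π * (1 + x ^ 2)))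
      (integrandDeriv t x) t := by
    have h : (1 + (x - t) ^ 2 : ℝ) ≠ 0 := by positivity
    refine ((((hasDerivAt_id' t).const_sub x).pow 2 |>.const_add 1).log h
      |>.div_const (π * (1 + x ^ 2))).congr_deriv ?_
    simp only [integrandDeriv, Pi.pow_apply]
    field_simp
    ring
  rw [intervalIntegral.integral_eq_sub_of_hasDerivAt (fun t _ => hderiv t)
    ((continuous_integrandDeriv.comp (Continuous.prodMk_left x)).intervalIntegrable 0 b)]
  simp [sub_div]

/-- A primitive in `x` of `integrandDeriv t x` for `t ≠ 0`, from the partial fraction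
decomposition; it is written so that all but the last term vanish at `±∞`. -/
noncomputable def primitive (t x : ℝ) : ℝ :=
  (log (1 + x ^ 2) - log (1 + (x - t) ^ 2)) / (π * (t ^ 2 + 4))
    - 4 / (π * t * (t ^ 2 + 4)) * (arctan (x - t) - arctan x)
    + 2 * t / (π * (t ^ 2 + 4)) * arctan x

theorem hasDerivAt_primitive {t : ℝ} (ht : t ≠ 0) (x : ℝ) :
    HasDerivAt (primitive t) (integrandDeriv t x) x := by
  have h₀ : (1 + x ^ 2 : ℝ) ≠ 0 := by positivity
  have hₜ : (1 + (x - t) ^ 2 : ℝ) ≠ 0 := by positivity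
  have hsq : HasDerivAt (fun x => 1 + x ^ 2) (2 * x) x := by
    simpa using ((hasDerivAt_id' x).pow 2).const_add 1
  have hsqₜ : HasDerivAt (fun x => 1 + (x - t) ^ 2) (2 * (x - t)) x := by
    simpa using (((hasDerivAt_id' x).sub_const t).pow 2).const_add 1
  have harctanₜ : HasDerivAt (fun x => arctan (x - t)) (1 / (1 + (x - t) ^ 2)) x :=
    (hasDerivAt_arctan (x - t)).comp_sub_const x t
  refine ((((hsq.log h₀).sub (hsqₜ.log hₜ)).div_const _).sub
    ((harctanₜ.sub (hasDerivAt_arctan x)).const_mul _) |>.add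
    ((hasDerivAt_arctan x).const_mul _)).congr_deriv ?_
  have := pi_pos
  have h₄ : (t ^ 2 + 4 : ℝ) ≠ 0 := by positivity
  simp only [integrandDeriv]
  field_simp
  ring

theorem tendsto_primitive_sub_arctan (t : ℝ) :
    Tendsto (fun x => primitive t x - 2 * t / (π * (t ^ 2 + 4)) * arctan x) (cocompact ℝ)
      (𝓝 0) := by
  simpa [primitive] using
    ((tendsto_log_one_add_sq_sub_log_one_add_sub_sq t).div_const (π * (t ^ 2 + 4))).sub
      ((tendsto_arctan_sub_sub_arctan t).const_mul (4 / (π * t * (t ^ 2 + 4))))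

theorem integral_integrandDeriv {t : ℝ} (ht : t ≠ 0) :
    ∫ x, integrandDeriv t x = 2 * t / (t ^ 2 + 4) := by
  have hlim {l : Filter ℝ} {a : ℝ} (hl : l ≤ cocompact ℝ) (ha : Tendsto arctan l (𝓝 a)) :
      Tendsto (primitive t) l (𝓝 (2 * t / (π * (t ^ 2 + 4)) * a)) := by
    have h := ((tendsto_primitive_sub_arctan t).mono_left hl).add
      (ha.const_mul (2 * t / (π * (t ^ 2 + 4))))
    rw [zero_add] at h
    exact h.congr fun x => sub_add_cancel _ _
  rw [integral_of_hasDerivAt_of_tendsto (hasDerivAt_primitive ht) (integrable_integrandDeriv t)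
    (hlim atBot_le_cocompact (tendsto_nhds_of_tendsto_nhdsWithin tendsto_arctan_atBot))
    (hlim atTop_le_cocompact (tendsto_nhds_of_tendsto_nhdsWithin tendsto_arctan_atTop))]
  have := pi_pos.ne'
  field_simp
  ring

end CauchyKL

open CauchyKL in
theorem integral_log_one_add_sub_sq_sub_log_div (b : ℝ) :
    ∫ x, (log (1 + (x - b) ^ 2) - log (1 + x ^ 2)) / (π * (1 + x ^ 2)) =
      log (1 + b ^ 2 / 4) := by
  have hint : Integrable (Function.uncurry integrandDeriv)
      ((volume.restrict (Set.uIoc 0 b)).prod volume) :=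
    ((intervalIntegrable_const (c := (1 : ℝ))).def'.mul_prod
      integrable_inv_pi_mul_one_add_sq).mono' continuous_integrandDeriv.aestronglyMeasurable
      (Eventually.of_forall fun ⟨t, x⟩ => by simpa using abs_integrandDeriv_le t x)
  have hderiv (t : ℝ) : HasDerivAt (fun t => log (t ^ 2 + 4)) (2 * t / (t ^ 2 + 4)) t := by
    have h : (t ^ 2 + 4 : ℝ) ≠ 0 := by positivity
    simpa using (((hasDerivAt_id' t).pow 2).add_const 4).log h
  have hcont : Continuous fun t : ℝ => 2 * t / (t ^ 2 + 4) :=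
    (continuous_id.const_mul 2).div (by fun_prop) fun t => by positivity
  calc ∫ x, (log (1 + (x - b) ^ 2) - log (1 + x ^ 2)) / (π * (1 + x ^ 2))
      = ∫ x, ∫ t in (0 : ℝ)..b, integrandDeriv t x := by
        simp_rw [intervalIntegral_integrandDeriv]
    _ = ∫ t in (0 : ℝ)..b, ∫ x, integrandDeriv t x :=
        (intervalIntegral_integral_swap hint).symm
    _ = ∫ t in (0 : ℝ)..b, 2 * t / (t ^ 2 + 4) :=
        intervalIntegral.integral_congr_ae
          ((Measure.ae_ne volume 0).mono fun t ht _ => integral_integrandDeriv ht)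
    _ = log (1 + b ^ 2 / 4) := by
        rw [intervalIntegral.integral_eq_sub_of_hasDerivAt (fun t _ => hderiv t)
          (hcont.intervalIntegrable 0 b), ← log_div (by positivity) (by norm_num)]
        congr 1
        ring

noncomputable def cauchyDensity (θ σ x : ℝ) : ℝ := 1 / (π * σ * (1 + ((x - θ) / σ) ^ 2))

section CauchyDensity

variable {θ σ : ℝ}

theorem cauchyMeasure_eq_withDensity :
    cauchyMeasure θ σ = volume.withDensity fun x => ENNReal.ofReal (cauchyDensity θ σ x) := rfl

theorem measurable_cauchyDensity : Measurable (cauchyDensity θ σ) := by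
  unfold cauchyDensity
  fun_prop

theorem cauchyDensity_pos (hσ : 0 < σ) (x : ℝ) : 0 < cauchyDensity θ σ x := by
  unfold cauchyDensity
  have := pi_pos
  positivity

theorem integral_cauchyDensity_mul_log_div (hσ : 0 < σ) (θ θ' : ℝ) :
    ∫ x, cauchyDensity θ σ x * log (cauchyDensity θ σ x / cauchyDensity θ' σ x) =
      log (1 + (θ - θ') ^ 2 / (4 * σ ^ 2)) := by
  set b := (θ' - θ) / σ with hb
  set h : ℝ → ℝ := fun u => (log (1 + (u - b) ^ 2) - log (1 + u ^ 2)) / (π * (1 + u ^ 2))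
  have hpoint (x : ℝ) :
      cauchyDensity θ σ x * log (cauchyDensity θ σ x / cauchyDensity θ' σ x) =
        σ⁻¹ * h ((x - θ) / σ) := by
    have hu : (x - θ') / σ = (x - θ) / σ - b := by rw [hb]; ring
    have h₁ : (1 + ((x - θ) / σ) ^ 2 : ℝ) ≠ 0 := by positivity
    have h₂ : (1 + ((x - θ') / σ) ^ 2 : ℝ) ≠ 0 := by positivity
    have := pi_pos.ne'
    have hratio : cauchyDensity θ σ x / cauchyDensity θ' σ x =
        (1 + ((x - θ') / σ) ^ 2) / (1 + ((x - θ) / σ) ^ 2) := by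
      unfold cauchyDensity; field_simp
    rw [hratio, log_div h₂ h₁]
    simp only [h, ← hu]
    unfold cauchyDensity
    field_simp
  calc ∫ x, cauchyDensity θ σ x * log (cauchyDensity θ σ x / cauchyDensity θ' σ x)
      = σ⁻¹ * ∫ x, h (x / σ) := by
        simp_rw [hpoint, integral_const_mul]
        exact congrArg _ (integral_sub_right_eq_self (fun x => h (x / σ)) θ)
    _ = ∫ u, h u := by
        rw [Measure.integral_comp_div, abs_of_pos hσ, smul_eq_mul, inv_mul_cancel_left₀ hσ.ne']
    _ = log (1 + b ^ 2 / 4) := integral_log_one_add_sub_sq_sub_log_div b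
    _ = log (1 + (θ - θ') ^ 2 / (4 * σ ^ 2)) := by
        rw [hb]
        congr 1
        field_simp
        ring

end CauchyDensity

/-- KL divergence between Cauchy distributions with common scale `σ`:
`KL(P_θ ‖ P_θ') = log(1 + (θ − θ')²/(4σ²)) ≤ (θ − θ')²/(4σ²)`. -/
theorem klDiv_cauchy (θ θ' σ : ℝ) (hσ : 0 < σ) :
    klDiv (cauchyMeasure θ σ) (cauchyMeasure θ' σ) =
      ENNReal.ofReal (Real.log (1 + (θ - θ') ^ 2 / (4 * σ ^ 2))) ∧
    klDiv (cauchyMeasure θ σ) (cauchyMeasure θ' σ) ≤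
      ENNReal.ofReal ((θ - θ') ^ 2 / (4 * σ ^ 2)) := by
  have hkl : klDiv (cauchyMeasure θ σ) (cauchyMeasure θ' σ) =
      ENNReal.ofReal (log (1 + (θ - θ') ^ 2 / (4 * σ ^ 2))) := by
    rw [cauchyMeasure_eq_withDensity, cauchyMeasure_eq_withDensity,
      klDiv_withDensity_ofReal measurable_cauchyDensity measurable_cauchyDensity
        (fun x => (cauchyDensity_pos hσ x).le) (cauchyDensity_pos hσ),
      integral_cauchyDensity_mul_log_div hσ]
  refine ⟨hkl, hkl ▸ ENNReal.ofReal_le_ofReal ?_⟩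
  have := log_le_sub_one_of_pos (by positivity : 0 < 1 + (θ - θ') ^ 2 / (4 * σ ^ 2))
  linarith
end

section
/- Suppose a family {P_v}_{v ∈ {0,1}^∞} of distributions has parameter separation (δ_k): for all k and all v, v' with v_{1:k} ≠ v'_{1:k}, |θ(P_v) − θ(P_{v'})| ≥ δ_k. If (θ̂_n) is an (α, t(·))-estimator, then setting n_k = inf{n : t(n) < δ_k/2}, the tests V̂_k(X_{1:n_k}) defined as the k-th bit of argmin_{v} |θ̂_{n_k} − θ(P_v)| satisfy: for all v, P_v(V̂_k = v_k for all k) ≥ 1 − α. -/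
open MeasureTheory
open scoped ENNReal

/-- Proposition 1 (reduction from time-uniform estimation to time-uniform testing).
If `{P_v}` has parameter separation `(δ_k)` and `θ̂` is an `(α, t(·))`-estimator, then
with `n_k = inf {n : t(n) < δ_k / 2}`, the tests given by the `k`-th bit of the
projection `argmin_v |θ̂_{n_k} − θ(P_v)|` recover all bits of `v` with
`P_v`-probability at least `1 − α`. -/
theorem estimation_to_testing
    {Ω : Type*} [MeasurableSpace Ω]
    (ℙ : (ℕ → Bool) → Measure Ω) [∀ v, IsProbabilityMeasure (ℙ v)]
    (θfam : (ℕ → Bool) → ℝ) (δ : ℕ → ℝ)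
    (hsep : ∀ k, 1 ≤ k → ∀ v v' : ℕ → Bool,
      (∃ i, 1 ≤ i ∧ i ≤ k ∧ v i ≠ v' i) → δ k ≤ |θfam v - θfam v'|)
    (α : ℝ) (t : ℕ → ℝ) (θhat : ℕ → Ω → ℝ)
    (hest : ∀ v, ENNReal.ofReal (1 - α) ≤
      ℙ v {ω | ∀ n, 1 ≤ n → |θhat n ω - θfam v| ≤ t n})
    (nk : ℕ → ℕ)
    (hne : ∀ k, 1 ≤ k → ∃ n, 1 ≤ n ∧ t n < δ k / 2)
    (hnk : ∀ k, nk k = sInf {n | 1 ≤ n ∧ t n < δ k / 2})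
    (proj : ℝ → (ℕ → Bool))
    (hproj : ∀ ϑ v, |ϑ - θfam (proj ϑ)| ≤ |ϑ - θfam v|) :
    ∀ v, ENNReal.ofReal (1 - α) ≤
      ℙ v {ω | ∀ k, 1 ≤ k → proj (θhat (nk k) ω) k = v k} := by
  intro v
  refine le_trans (hest v) (measure_mono ?_)
  intro ω hω k hk
  have hmem : nk k ∈ {n | 1 ≤ n ∧ t n < δ k / 2} := by
    rw [hnk k]
    exact Nat.sInf_mem (by obtain ⟨n, hn⟩ := hne k hk; exact ⟨n, hn⟩)
  obtain ⟨h1, h2⟩ := hmem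
  set ϑ := θhat (nk k) ω with hϑ
  have hb : |ϑ - θfam v| < δ k / 2 := lt_of_le_of_lt (hω (nk k) h1) h2
  have hb2 : |ϑ - θfam (proj ϑ)| < δ k / 2 := lt_of_le_of_lt (hproj ϑ v) hb
  by_contra hne'
  have hd : δ k ≤ |θfam (proj ϑ) - θfam v| :=
    hsep k hk _ _ ⟨k, hk, le_refl k, hne'⟩
  have : |θfam (proj ϑ) - θfam v| ≤ |ϑ - θfam (proj ϑ)| + |ϑ - θfam v| := by
    have := abs_sub (θfam (proj ϑ)) (θfam v)
    calc |θfam (proj ϑ) - θfam v| = |(ϑ - θfam v) - (ϑ - θfam (proj ϑ))| := by ring_nf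
      _ ≤ |ϑ - θfam v| + |ϑ - θfam (proj ϑ)| := abs_sub _ _
      _ = _ := by ring
  linarith
end
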